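/- arXiv:1410.0503 — 4 statements merged into one kernel-verified Lean document; each statement's English description precedes it below -/
import Mathlib

section
/- Let f:(0,∞)→ℝ be convex with f(1)=0, and define φ_f(a,b) as the f-divergence between Bernoulli(a) and Bernoulli(b). Then for every fixed a∈[0,1], the map b ↦ φ_f(a,b) is non-decreasing on [a,1]. -/
open MeasureTheory Filter Set
open scoped ENNReal NNReal

noncomputable section

/-- `phiF f fInf a b`: the `f`-divergence between Bernoulli(`a`) and Bernoulli(`b`),
with `fInf` representing `f'(∞) = lim_{x→∞} f(x)/x`. -/
def phiF (f : ℝ → ℝ) (fInf : EReal) (a b : ℝ) : EReal :=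
  if b = 0 then ((f (1 - a) : ℝ) : EReal) + (a : EReal) * fInf
  else if b = 1 then ((f a : ℝ) : EReal) + ((1 - a : ℝ) : EReal) * fInf
  else ((b : ℝ) : EReal) * ((f (a / b) : ℝ) : EReal)
    + ((1 - b : ℝ) : EReal) * ((f ((1 - a) / (1 - b)) : ℝ) : EReal)

/-- The `f`-divergence `D_f(P‖Q)`, defined via the Radon–Nikodym derivative of `P`
with respect to `Q`, with `fInf = f'(∞)` weighting the `Q`-singular mass of `P`. -/
def fDiv {X : Type*} [MeasurableSpace X] (f : ℝ → ℝ) (fInf : EReal)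
    (P Q : Measure X) : EReal :=
  ((∫ x, f ((P.rnDeriv Q x).toReal) ∂Q : ℝ) : EReal)
    + fInf * ((((P.singularPart Q) Set.univ).toReal : ℝ) : EReal)

/-- Conversion from `EReal` to `ℝ≥0∞`, clamping negative values to `0`. -/
def erealToENNReal (x : EReal) : ℝ≥0∞ :=
  if x = ⊤ then ⊤ else ENNReal.ofReal x.toReal

/-- The `f`-informativity `I_f(w, P) = inf_Q ∫ D_f(P_θ‖Q) w(dθ)`. -/
def fInformativity {Θ X : Type*} [MeasurableSpace Θ] [MeasurableSpace X]
    (f : ℝ → ℝ) (fInf : EReal) (P : Θ → Measure X) (w : Measure Θ) : EReal :=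
  ⨅ (Q : Measure X) (_ : IsProbabilityMeasure Q),
    ((∫⁻ θ, erealToENNReal (fDiv f fInf (P θ) Q) ∂w : ℝ≥0∞) : EReal)

/-- The Bayes risk `inf_𝔡 ∫ E_θ [L(θ, 𝔡(X))] w(dθ)`, infimum over measurable decision rules. -/
def bayesRisk {Θ X A : Type*} [MeasurableSpace Θ] [MeasurableSpace X] [MeasurableSpace A]
    (P : Θ → Measure X) (w : Measure Θ) (L : Θ → A → ℝ) : ℝ :=
  ⨅ d : {d : X → A // Measurable d}, ∫ θ, ∫ x, L θ (d.1 x) ∂(P θ) ∂w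

/-- `u_f(x) = inf{b ∈ [1/2,1] : φ_f(1/2,b) > x}`, equal to 1 if no such `b` exists. -/
def uF (f : ℝ → ℝ) (fInf : EReal) (x : EReal) : ℝ :=
  sInf ({b : ℝ | b ∈ Set.Icc (1/2 : ℝ) 1 ∧ x < phiF f fInf (1/2) b} ∪ {1})

/-- Squared Hellinger distance `H²(P‖Q) = 2 D_{f_{1/2}}(P‖Q)` with `f_{1/2}(x) = 1 - √x`. -/
def hellingerSq {X : Type*} [MeasurableSpace X] (P Q : Measure X) : ℝ :=
  2 * (fDiv (fun x => 1 - Real.sqrt x) 0 P Q).toReal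

/-! Write `φ_f(a, b) = g(a, b) + g(1 - a, 1 - b)` with the perspective `g(p, q) = q f(p / q)`,
extended to `q = 0` by `p f'(∞)`. For `p ≥ 0` the map `q ↦ g(p, q)` is convex on `[0, ∞)` and
vanishes at `q = p`; at the endpoint `q = 0` this rests on `f(x) / (x - 1) ≤ f'(∞)` for `x > 1`.
Hence `b ↦ φ_f(a, b)` is convex and vanishes at `b = a`. It is also nonnegative, since a supporting
line `s (x - 1)` of `f` at `1` bounds the two perspectives below by `s (a - b)` and `s (b - a)`.
A nonnegative convex function vanishing at `a` is nondecreasing on `[a, 1]`. -/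

open Topology

lemma ContinuousWithinAt.tendsto_add_nhdsGT_zero {f : ℝ → ℝ} {z : ℝ}
    (h : ContinuousWithinAt f (Ioi z) z) :
    Tendsto (fun ε => f (z + ε)) (𝓝[>] 0) (𝓝 (f z)) := by
  refine h.tendsto.comp (tendsto_nhdsWithin_of_tendsto_nhds_of_eventually_within _ ?_ ?_)
  · exact ((continuous_const_add z).tendsto' 0 z (add_zero z)).mono_left nhdsWithin_le_nhds
  · filter_upwards [self_mem_nhdsWithin] with ε (hε : 0 < ε)
    exact lt_add_of_pos_right z hε

lemma ConvexOn.Ici_of_continuousWithinAt {f : ℝ → ℝ} {c : ℝ} (hf : ConvexOn ℝ (Ioi c) f)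
    (hc : ContinuousWithinAt f (Ioi c) c) : ConvexOn ℝ (Ici c) f := by
  have hcont : ∀ z ∈ Ici c, Tendsto (fun ε => f (z + ε)) (𝓝[>] 0) (𝓝 (f z)) := by
    intro z hz
    rcases (mem_Ici.1 hz).eq_or_lt with rfl | hz
    · exact hc.tendsto_add_nhdsGT_zero
    · exact ((hf.continuousOn isOpen_Ioi).continuousAt
        (isOpen_Ioi.mem_nhds hz)).continuousWithinAt.tendsto_add_nhdsGT_zero
  refine ⟨convex_Ici c, fun x hx y hy p q hp hq hpq => ?_⟩
  have hshift : ∀ᶠ ε in 𝓝[>] 0, f (p • x + q • y + ε) ≤ p • f (x + ε) + q • f (y + ε) := by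
    filter_upwards [self_mem_nhdsWithin] with ε (hε : 0 < ε)
    have hx' : x + ε ∈ Ioi c := by simp only [mem_Ioi]; linarith [mem_Ici.1 hx]
    have hy' : y + ε ∈ Ioi c := by simp only [mem_Ioi]; linarith [mem_Ici.1 hy]
    have hcomb : p • x + q • y + ε = p • (x + ε) + q • (y + ε) := by
      simp only [smul_eq_mul]
      linear_combination ε * hpq.symm
    exact hcomb ▸ hf.2 hx' hy' hp hq hpq
  exact le_of_tendsto_of_tendsto (hcont _ ((convex_Ici c) hx hy hp hq hpq))
    (((hcont x hx).const_smul p).add ((hcont y hy).const_smul q)) hshift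

lemma ConvexOn.exists_mul_sub_le_sub {S : Set ℝ} {f : ℝ → ℝ} {x : ℝ} (hf : ConvexOn ℝ S f)
    (hx : x ∈ interior S) : ∃ s, ∀ y ∈ S, s * (y - x) ≤ f y - f x := by
  refine ⟨derivWithin f (Ioi x) x, fun y hy => ?_⟩
  rcases lt_trichotomy y x with hyx | rfl | hxy
  · have h := (hf.slope_le_leftDeriv_of_mem_interior hy hx hyx).trans
      (hf.leftDeriv_le_rightDeriv_of_mem_interior hx)
    rw [slope_def_field, div_le_iff₀ (sub_pos.2 hyx)] at h
    linarith
  · simp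
  · have h := hf.rightDeriv_le_slope_of_mem_interior hx hy hxy
    rwa [slope_def_field, le_div_iff₀ (sub_pos.2 hxy)] at h

lemma ConvexOn.coe_slope_le_of_tendsto_div {f : ℝ → ℝ} {c a x : ℝ} {L : EReal}
    (hf : ConvexOn ℝ (Ici c) f) (ha : c ≤ a) (hax : a < x)
    (hL : Tendsto (fun y : ℝ => ((f y / y : ℝ) : EReal)) atTop (𝓝 L)) :
    ((slope f a x : ℝ) : EReal) ≤ L := by
  set m := slope f a x
  have hlow : Tendsto (fun y : ℝ => ((m + (f a - m * a) / y : ℝ) : EReal)) atTop (𝓝 (m : EReal)) :=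
    continuous_coe_real_ereal.continuousAt.tendsto.comp <| by
      simpa using tendsto_const_nhds.add
        ((tendsto_const_nhds (x := f a - m * a)).div_atTop tendsto_id)
  refine le_of_tendsto_of_tendsto hlow hL ?_
  filter_upwards [eventually_ge_atTop x, eventually_gt_atTop 0] with y hxy hy
  have hm : m ≤ (f y - f a) / (y - a) := by
    simp only [m, slope_def_field]
    exact hf.secant_mono ha (by simp; linarith) (by simp; linarith) hax.ne' (by linarith) hxy
  rw [le_div_iff₀ (by linarith)] at hm
  refine EReal.coe_le_coe_iff.2 ?_
  have hdiff : f y / y - (m + (f a - m * a) / y) = (f y - f a - m * (y - a)) / y := by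
    field_simp
    ring
  linarith [div_nonneg (sub_nonneg.2 hm) hy.le]

def perspective (f : ℝ → ℝ) (fInf : EReal) (p q : ℝ) : EReal :=
  if q = 0 then p * fInf else ((q * f (p / q) : ℝ) : EReal)

lemma phiF_eq_perspective_add (f : ℝ → ℝ) (fInf : EReal) (a b : ℝ) :
    phiF f fInf a b = perspective f fInf a b + perspective f fInf (1 - a) (1 - b) := by
  unfold phiF perspective
  split_ifs <;> simp_all [add_comm, sub_eq_zero]

section Perspective

variable {f : ℝ → ℝ} {fInf : EReal}

lemma coe_mul_sub_le_perspective {s : ℝ} (hs : ∀ y ≥ 0, s * (y - 1) ≤ f y)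
    (hsInf : (s : EReal) ≤ fInf) {p q : ℝ} (hp : 0 ≤ p) (hq : 0 ≤ q) :
    ((s * (p - q) : ℝ) : EReal) ≤ perspective f fInf p q := by
  unfold perspective
  split_ifs with hq0
  · rw [hq0, sub_zero, mul_comm, EReal.coe_mul]
    exact mul_le_mul_of_nonneg_left hsInf (EReal.coe_nonneg.2 hp)
  · refine EReal.coe_le_coe_iff.2 ?_
    have hq' : 0 < q := lt_of_le_of_ne hq (Ne.symm hq0)
    calc s * (p - q) = q * (s * (p / q - 1)) := by field_simp
      _ ≤ q * f (p / q) := mul_le_mul_of_nonneg_left (hs _ (by positivity)) hq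

lemma zero_le_phiF (hf : ConvexOn ℝ (Ici 0) f) (hf1 : f 1 = 0)
    (hfInf : Tendsto (fun y : ℝ => ((f y / y : ℝ) : EReal)) atTop (𝓝 fInf))
    {a b : ℝ} (ha : a ∈ Icc (0 : ℝ) 1) (hb : b ∈ Icc (0 : ℝ) 1) : 0 ≤ phiF f fInf a b := by
  obtain ⟨s, hs⟩ := hf.exists_mul_sub_le_sub (x := 1) (by simp)
  simp only [hf1, sub_zero] at hs
  have hsInf : (s : EReal) ≤ fInf := by
    refine le_trans ?_ (hf.coe_slope_le_of_tendsto_div zero_le_one one_lt_two hfInf)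
    have h2 := hs 2 (by norm_num)
    norm_num [slope_def_field, hf1] at h2 ⊢
    exact h2
  rw [phiF_eq_perspective_add]
  calc (0 : EReal) = ((s * (a - b) : ℝ) : EReal) + ((s * ((1 - a) - (1 - b)) : ℝ) : EReal) := by
        norm_cast
        ring
    _ ≤ _ := add_le_add (coe_mul_sub_le_perspective hs hsInf ha.1 hb.1)
        (coe_mul_sub_le_perspective hs hsInf (by linarith [ha.2]) (by linarith [hb.2]))

lemma mul_apply_div_convexComb_le (hf : ConvexOn ℝ (Ici 0) f) (hf1 : f 1 = 0) {c t q : ℝ}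
    (hc : 0 ≤ c) (ht0 : 0 ≤ t) (ht1 : t ≤ 1) (hq : 0 < q) (hr : 0 < t * c + (1 - t) * q) :
    (t * c + (1 - t) * q) * f (c / (t * c + (1 - t) * q)) ≤ (1 - t) * (q * f (c / q)) := by
  set r := t * c + (1 - t) * q
  have hcomb : (t * c / r) • (1 : ℝ) + ((1 - t) * q / r) • (c / q) = c / r := by
    simp only [smul_eq_mul]
    field_simp
    ring
  have hsum : t * c / r + (1 - t) * q / r = 1 := by
    rw [← add_div, div_self hr.ne']
  have h := hf.2 (mem_Ici.2 zero_le_one) (mem_Ici.2 (by positivity : 0 ≤ c / q))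
    (by positivity) (div_nonneg (mul_nonneg (by linarith) hq.le) hr.le) hsum
  rw [hcomb, smul_eq_mul, smul_eq_mul, hf1, mul_zero, zero_add] at h
  calc r * f (c / r) ≤ r * ((1 - t) * q / r * f (c / q)) := mul_le_mul_of_nonneg_left h hr.le
    _ = (1 - t) * (q * f (c / q)) := by field_simp

lemma coe_mul_apply_inv_le (hf : ConvexOn ℝ (Ici 0) f) (hf1 : f 1 = 0)
    (hfInf : Tendsto (fun y : ℝ => ((f y / y : ℝ) : EReal)) atTop (𝓝 fInf))
    {t : ℝ} (ht0 : 0 < t) (ht1 : t ≤ 1) :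
    ((t * f t⁻¹ : ℝ) : EReal) ≤ ((1 - t : ℝ) : EReal) * fInf := by
  rcases ht1.eq_or_lt with rfl | ht1
  · simp [hf1]
  have hslope : t * f t⁻¹ = (1 - t) * slope f 1 t⁻¹ := by
    have : t⁻¹ - 1 ≠ 0 := sub_ne_zero.2 (one_lt_inv₀ ht0 |>.2 ht1).ne'
    rw [slope_def_field, hf1, sub_zero]
    field_simp
  rw [hslope, EReal.coe_mul]
  exact mul_le_mul_of_nonneg_left
    (hf.coe_slope_le_of_tendsto_div zero_le_one (one_lt_inv₀ ht0 |>.2 ht1) hfInf)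
    (EReal.coe_nonneg.2 (by linarith))

lemma perspective_convexComb_le (hf : ConvexOn ℝ (Ici 0) f) (hf1 : f 1 = 0)
    (hfInf : Tendsto (fun y : ℝ => ((f y / y : ℝ) : EReal)) atTop (𝓝 fInf))
    {c t q : ℝ} (hc : 0 ≤ c) (ht0 : 0 ≤ t) (ht1 : t ≤ 1) (hq : 0 ≤ q) :
    perspective f fInf c (t * c + (1 - t) * q) ≤
      ((1 - t : ℝ) : EReal) * perspective f fInf c q := by
  rcases hq.eq_or_lt with rfl | hq
  · rcases hc.eq_or_lt with rfl | hc
    · simp [perspective]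
    rcases ht0.eq_or_lt with rfl | ht0
    · simp [perspective]
    have htc : t * c ≠ 0 := by positivity
    calc perspective f fInf c (t * c + (1 - t) * 0) = (c : EReal) * ((t * f t⁻¹ : ℝ) : EReal) := by
          rw [perspective, if_neg (by simpa using htc), ← EReal.coe_mul]
          congr 1
          rw [mul_zero, add_zero, show c / (t * c) = t⁻¹ by field_simp]
          ring
      _ ≤ (c : EReal) * (((1 - t : ℝ) : EReal) * fInf) :=
          mul_le_mul_of_nonneg_left (coe_mul_apply_inv_le hf hf1 hfInf ht0 ht1)
            (EReal.coe_nonneg.2 hc.le)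
      _ = _ := by simp [perspective, mul_left_comm]
  rcases (show 0 ≤ t * c + (1 - t) * q by nlinarith).eq_or_lt with hr | hr
  · have ht : t = 1 := by nlinarith
    subst ht
    have hc0 : c = 0 := by linarith
    simp [perspective, hc0]
  rw [perspective, perspective, if_neg hr.ne', if_neg hq.ne', ← EReal.coe_mul]
  exact EReal.coe_le_coe_iff.2 (mul_apply_div_convexComb_le hf hf1 hc ht0 ht1 hq hr)

end Perspective

/-- For convex `f` on `(0,∞)` with `f 1 = 0` and `f'(∞) = fInf`,
for every fixed `a ∈ [0,1]` the map `b ↦ φ_f(a,b)` is non-decreasing on `[a,1]`. -/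
theorem phiF_monotone_in_second_arg
    (f : ℝ → ℝ) (fInf : EReal)
    (hf : ConvexOn ℝ (Set.Ioi (0:ℝ)) f)
    (hf0 : Filter.Tendsto f (nhdsWithin 0 (Set.Ioi 0)) (nhds (f 0)))
    (hf1 : f 1 = 0)
    (hfInf : Filter.Tendsto (fun x : ℝ => ((f x / x : ℝ) : EReal)) Filter.atTop (nhds fInf))
    (a : ℝ) (ha : a ∈ Set.Icc (0:ℝ) 1) :
    MonotoneOn (fun b => phiF f fInf a b) (Set.Icc a 1) := by
  have hF : ConvexOn ℝ (Ici 0) f := hf.Ici_of_continuousWithinAt hf0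
  obtain ⟨ha0, ha1⟩ := ha
  rintro b₁ ⟨hab₁, -⟩ b₂ ⟨hab₂, hb₂1⟩ h12
  rcases h12.eq_or_lt with rfl | h12
  · exact le_rfl
  set t := (b₂ - b₁) / (b₂ - a)
  have hb₂a : 0 < b₂ - a := by linarith
  have ht0 : 0 ≤ t := div_nonneg (by linarith) hb₂a.le
  have ht1 : t ≤ 1 := (div_le_one hb₂a).2 (by linarith)
  have hb₁_eq : t * a + (1 - t) * b₂ = b₁ := by simp only [t]; field_simp; ring
  have hb₁_eq' : t * (1 - a) + (1 - t) * (1 - b₂) = 1 - b₁ := by linear_combination -hb₁_eq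
  have hφ₂ : 0 ≤ phiF f fInf a b₂ := zero_le_phiF hF hf1 hfInf ⟨ha0, ha1⟩ ⟨by linarith, hb₂1⟩
  calc phiF f fInf a b₁
      = perspective f fInf a (t * a + (1 - t) * b₂)
        + perspective f fInf (1 - a) (t * (1 - a) + (1 - t) * (1 - b₂)) := by
        rw [hb₁_eq, hb₁_eq', phiF_eq_perspective_add]
    _ ≤ ((1 - t : ℝ) : EReal) * perspective f fInf a b₂
        + ((1 - t : ℝ) : EReal) * perspective f fInf (1 - a) (1 - b₂) :=
        add_le_add (perspective_convexComb_le hF hf1 hfInf ha0 ht0 ht1 (by linarith))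
          (perspective_convexComb_le hF hf1 hfInf (by linarith) ht0 ht1 (by linarith))
    _ = ((1 - t : ℝ) : EReal) * phiF f fInf a b₂ := by
        rw [phiF_eq_perspective_add, EReal.left_distrib_of_nonneg_of_ne_top
          (EReal.coe_nonneg.2 (by linarith)) (EReal.coe_ne_top _)]
    _ ≤ phiF f fInf a b₂ := by
        simpa using mul_le_mul_of_nonneg_right
          (EReal.coe_le_coe_iff.2 (by linarith : 1 - t ≤ 1)) hφ₂
end
end

section
/- With zero-one loss L and prior w, the Bayes risk R satisfies R ≥ R_0 - I_TV(w, P), where I_TV(w,P) := inf_Q ∫_Θ ‖P_θ - Q‖_TV w(dθ) is the total-variation informativity and R_0 := 1 - sup_{a∈A} w{θ : L(θ,a)=0}. -/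
/-!
Fix a decision rule `d` and let `S = {(θ, x) | L θ (d x) = 0}` be the event that it decides
correctly, so that its risk is `1 - (w ⊗ P) S`. For any probability measure `Q`, each slice
satisfies `P θ (S θ) ≤ Q (S θ) + ‖P θ - Q‖_TV`, while by Fubini
`(w × Q) S = ∫ w {θ | L θ (d x) = 0} dQ(x) ≤ 1 - R₀`. Integrating against `w` and taking the
infimum over `Q` gives `1 - risk ≤ 1 - R₀ + I_TV(w, P)`.
-/

open MeasureTheory Filter Set
open scoped ENNReal NNReal

noncomputable section

section TotalVariation

variable {X : Type*} [MeasurableSpace X]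

lemma measureReal_sub_measureReal_eq_singularPart_add_setIntegral (P Q : Measure X)
    [IsFiniteMeasure P] [IsFiniteMeasure Q] {T : Set X} (hT : MeasurableSet T) :
    P.real T - Q.real T
      = (P.singularPart Q).real T + ∫ x in T, ((P.rnDeriv Q x).toReal - 1) ∂Q := by
  have hP : P.real T = (P.singularPart Q).real T + (Q.withDensity (P.rnDeriv Q)).real T := by
    conv_lhs => rw [← P.singularPart_add_rnDeriv Q]
    exact measureReal_add_apply
  rw [hP, integral_sub Measure.integrable_toReal_rnDeriv.integrableOn (integrable_const 1),
    Measure.setIntegral_toReal_rnDeriv_eq_withDensity' hT, setIntegral_const, smul_eq_mul,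
    mul_one]
  ring

lemma measureReal_sub_measureReal_le_tv (P Q : Measure X)
    [IsProbabilityMeasure P] [IsProbabilityMeasure Q] {S : Set X} (hS : MeasurableSet S) :
    P.real S - Q.real S
      ≤ ∫ x, |(P.rnDeriv Q x).toReal - 1| / 2 ∂Q + (P.singularPart Q).real univ / 2 := by
  set g : X → ℝ := fun x => (P.rnDeriv Q x).toReal - 1
  have hg : Integrable g Q := Measure.integrable_toReal_rnDeriv.sub (integrable_const 1)
  have hS_le : P.real S - Q.real S ≤ (P.singularPart Q).real S + ∫ x in S, |g x| ∂Q := by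
    rw [measureReal_sub_measureReal_eq_singularPart_add_setIntegral P Q hS]
    exact add_le_add le_rfl (integral_mono hg.restrict hg.abs.restrict fun x => le_abs_self _)
  -- on `Sᶜ` the deviation has the opposite sign, since both measures have mass one
  have hSc_le : P.real S - Q.real S ≤ (P.singularPart Q).real Sᶜ + ∫ x in Sᶜ, |g x| ∂Q := by
    have h := measureReal_sub_measureReal_eq_singularPart_add_setIntegral P Q hS.compl
    rw [measureReal_compl hS, measureReal_compl hS] at h
    have : -∫ x in Sᶜ, g x ∂Q ≤ ∫ x in Sᶜ, |g x| ∂Q := by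
      rw [← integral_neg]
      exact integral_mono hg.restrict.neg hg.abs.restrict fun x => neg_le_abs _
    have : 0 ≤ (P.singularPart Q).real Sᶜ := measureReal_nonneg
    simp only [probReal_univ] at h
    linarith
  have h_int : ∫ x in S, |g x| ∂Q + ∫ x in Sᶜ, |g x| ∂Q = ∫ x, |g x| ∂Q :=
    integral_add_compl hS hg.abs
  have h_sing : (P.singularPart Q).real S + (P.singularPart Q).real Sᶜ
      = (P.singularPart Q).real univ := measureReal_add_measureReal_compl hS
  rw [integral_div]
  linarith

lemma fDiv_tv_eq (P Q : Measure X) :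
    fDiv (fun x => |x - 1| / 2) (((1:ℝ)/2 : ℝ) : EReal) P Q
      = ((∫ x, |(P.rnDeriv Q x).toReal - 1| / 2 ∂Q + (P.singularPart Q).real univ / 2 : ℝ)
          : EReal) := by
  rw [fDiv, ← EReal.coe_mul, ← EReal.coe_add, measureReal_def]
  ring_nf

lemma erealToENNReal_coe (x : ℝ) : erealToENNReal x = ENNReal.ofReal x := by
  rw [erealToENNReal, if_neg (EReal.coe_ne_top x), EReal.toReal_coe]

lemma measure_le_add_fDiv_tv (P Q : Measure X)
    [IsProbabilityMeasure P] [IsProbabilityMeasure Q] {S : Set X} (hS : MeasurableSet S) :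
    P S ≤ Q S + erealToENNReal (fDiv (fun x => |x - 1| / 2) (((1:ℝ)/2 : ℝ) : EReal) P Q) := by
  rw [fDiv_tv_eq, erealToENNReal_coe, ← ofReal_measureReal, ← ofReal_measureReal,
    ← ENNReal.ofReal_add measureReal_nonneg (by positivity)]
  exact ENNReal.ofReal_le_ofReal (by linarith [measureReal_sub_measureReal_le_tv P Q hS])

end TotalVariation

lemma EReal.coe_toReal_sub_toReal_le {a b c : ℝ≥0∞} (h : a ≤ b + c) (hb : b ≠ ∞) :
    ((a.toReal - b.toReal : ℝ) : EReal) ≤ c := by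
  rcases eq_or_ne c ∞ with rfl | hc
  · exact le_top
  rw [← EReal.coe_ennreal_toReal hc, EReal.coe_le_coe_iff, sub_le_iff_le_add']
  exact ENNReal.toReal_le_add h hb hc

lemma integrable_and_integral_eq_of_zero_or_one {Ω : Type*} [MeasurableSpace Ω]
    (π : Measure Ω) [IsProbabilityMeasure π] {g : Ω → ℝ} (hg : Measurable g)
    (h01 : ∀ ω, g ω = 0 ∨ g ω = 1) :
    Integrable g π ∧ ∫ ω, g ω ∂π = 1 - π.real {ω | g ω = 0} := by
  have hS : MeasurableSet {ω | g ω = 0} := hg (measurableSet_singleton 0)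
  have hg_eq : g = {ω | g ω = 0}ᶜ.indicator 1 := by
    funext ω
    rcases h01 ω with h | h <;> simp [h]
  refine ⟨hg_eq ▸ (integrable_const 1).indicator hS.compl, ?_⟩
  conv_lhs => rw [hg_eq]
  rw [integral_indicator_one hS.compl, measureReal_compl hS, probReal_univ]

section Decision

open ProbabilityTheory

variable {Θ X : Type*} [MeasurableSpace Θ] [MeasurableSpace X]

lemma compProd_apply_le_prod_apply_add_lintegral_fDiv_tv (μ : Measure Θ) [SFinite μ]
    (κ : Kernel Θ X) [IsMarkovKernel κ] (Q : Measure X) [IsProbabilityMeasure Q]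
    {S : Set (Θ × X)} (hS : MeasurableSet S) :
    (μ ⊗ₘ κ) S ≤ μ.prod Q S + ∫⁻ θ, erealToENNReal
      (fDiv (fun x => |x - 1| / 2) (((1:ℝ)/2 : ℝ) : EReal) (κ θ) Q) ∂μ := by
  rw [Measure.compProd_apply hS, Measure.prod_apply hS,
    ← lintegral_add_left (measurable_measure_prodMk_left hS)]
  exact lintegral_mono fun θ => measure_le_add_fDiv_tv (κ θ) Q (measurable_prodMk_left hS)

lemma prod_apply_le_of_forall_measure_slice_le (μ : Measure Θ) [SFinite μ]
    (Q : Measure X) [IsProbabilityMeasure Q] {S : Set (Θ × X)} (hS : MeasurableSet S)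
    {c : ℝ≥0∞} (h : ∀ x, μ ((·, x) ⁻¹' S) ≤ c) : μ.prod Q S ≤ c := by
  rw [Measure.prod_apply_symm hS]
  calc ∫⁻ x, μ ((·, x) ⁻¹' S) ∂Q ≤ ∫⁻ _, c ∂Q := lintegral_mono h
    _ = c := by simp

end Decision

/-- For zero-one loss, `R ≥ R_0 - I_TV(w,P)`, where the total-variation
informativity is the `f`-informativity for `f(x) = |x-1|/2` (with `f'(∞) = 1/2`), and
`IUp` is any real upper bound on it. -/
theorem bayes_risk_tv_lower_bound
    {Θ X A : Type*} [MeasurableSpace Θ] [MeasurableSpace X] [MeasurableSpace A] [Nonempty A]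
    (w : Measure Θ) [IsProbabilityMeasure w]
    (P : Θ → Measure X) (hP : ∀ θ, IsProbabilityMeasure (P θ)) (hPm : Measurable P)
    (L : Θ → A → ℝ) (hL01 : ∀ θ a, L θ a = 0 ∨ L θ a = 1)
    (hLm : Measurable (Function.uncurry L))
    (IUp : ℝ)
    (hI : fInformativity (fun x => |x - 1| / 2) (((1:ℝ)/2 : ℝ) : EReal) P w
        ≤ ((IUp : ℝ) : EReal)) :
    (1 - ⨆ a : A, (w {θ | L θ a = 0}).toReal) - IUp ≤ bayesRisk P w L := by
  let κ : ProbabilityTheory.Kernel Θ X := ⟨P, hPm⟩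
  have : ProbabilityTheory.IsMarkovKernel κ := ⟨hP⟩
  set s := ⨆ a : A, (w {θ | L θ a = 0}).toReal
  have : Nonempty {d : X → A // Measurable d} :=
    ⟨⟨fun _ => Classical.arbitrary A, measurable_const⟩⟩
  refine le_ciInf fun ⟨d, hd⟩ => ?_
  have hg : Measurable fun p : Θ × X => L p.1 (d p.2) :=
    hLm.comp (measurable_fst.prodMk (hd.comp measurable_snd))
  set S := {p : Θ × X | L p.1 (d p.2) = 0}
  have hS : MeasurableSet S := hg (measurableSet_singleton 0)
  obtain ⟨hg_int, h_joint⟩ :=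
    integrable_and_integral_eq_of_zero_or_one (w.compProd κ) hg fun p => hL01 p.1 (d p.2)
  have h_risk : ∫ θ, ∫ x, L θ (d x) ∂P θ ∂w = 1 - (w.compProd κ).real S :=
    (Measure.integral_compProd hg_int).symm.trans h_joint
  have hs_bdd : BddAbove (range fun a : A => (w {θ | L θ a = 0}).toReal) :=
    ⟨1, forall_mem_range.2 fun _ => measureReal_le_one⟩
  have h_slice (x : X) : w ((·, x) ⁻¹' S) ≤ ENNReal.ofReal s := by
    rw [← ofReal_measureReal]
    exact ENNReal.ofReal_le_ofReal (le_ciSup hs_bdd (d x))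
  have h_success : (((w.compProd κ).real S - (ENNReal.ofReal s).toReal : ℝ) : EReal)
      ≤ fInformativity (fun x => |x - 1| / 2) (((1:ℝ)/2 : ℝ) : EReal) P w :=
    le_iInf₂ fun Q _ => EReal.coe_toReal_sub_toReal_le
      ((compProd_apply_le_prod_apply_add_lintegral_fDiv_tv w κ Q hS).trans
        (add_le_add_left (prod_apply_le_of_forall_measure_slice_le w Q hS h_slice) _))
      ENNReal.ofReal_ne_top
  rw [ENNReal.toReal_ofReal (Real.iSup_nonneg fun _ => ENNReal.toReal_nonneg)] at h_success
  show _ ≤ ∫ θ, ∫ x, L θ (d x) ∂P θ ∂w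
  linarith [EReal.coe_le_coe_iff.mp (h_success.trans hI)]
end
end

section
/- Let Θ = A = {1,…,N}, L(θ,a) = 1{θ≠a}, and let w be the uniform prior. Suppose h² := (1/N²) Σ_{i,j} H²(P_{θ_i}‖P_{θ_j}) ≤ 2(1 - 1/N). Then the Bayes risk R satisfies R ≥ 1 - 1/N - ((N-2)/N)·(h²/2) - (√(N-1)/N)·√(h²(2-h²)). -/
open MeasureTheory Filter Set
open scoped ENNReal NNReal

noncomputable section

/-!
Dominate all hypotheses by `ν = ∑ i, P i` and write `p i` for the densities. The Hellinger
affinity is `1 - H²(P i‖P j) / 2 = ∫ √(p i * p j) dν`, so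
`N² (1 - h² / 2) = ∫ (∑ i, √(p i))² dν`.
For a decision rule `d`, split off the term `i = d x`: Cauchy–Schwarz over the other `N - 1`
terms and then in `L²(ν)` bound this by `(√(N - E) + √((N - 1) E))²`, where
`E = ∑ i, P i {d ≠ i}` is `N` times the risk of `d`. Solving this constraint for `E`, which
amounts to comparing angles in the plane, gives the bound.
-/

theorem Real.sum_sqrt_le_sqrt_add_sqrt {ι : Type*} [Fintype ι] {q : ι → ℝ}
    (hq : ∀ i, 0 ≤ q i) (k : ι) :
    ∑ i, √(q i) ≤ √(q k) + √((Fintype.card ι - 1) * (∑ i, q i - q k)) := by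
  classical
  have hcard : ((Finset.univ.erase k).card : ℝ) = Fintype.card ι - 1 := by
    rw [Finset.card_erase_of_mem (Finset.mem_univ k), Finset.card_univ,
      Nat.cast_sub (Fintype.card_pos_iff.2 ⟨k⟩)]
    simp
  have hCS := Real.sum_sqrt_mul_sqrt_le (Finset.univ.erase k) hq (fun _ => zero_le_one)
  simp only [Real.sqrt_one, mul_one, Finset.sum_const, nsmul_one, hcard] at hCS
  rw [← Finset.add_sum_erase _ (fun i => √(q i)) (Finset.mem_univ k),
    ← Finset.sum_erase_eq_sub (Finset.mem_univ k),
    Real.sqrt_mul' _ (Finset.sum_nonneg fun i _ => hq i), mul_comm]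
  gcongr

section

variable {X : Type*} [MeasurableSpace X] {μ : Measure X} {u v : X → ℝ}

lemma MeasureTheory.Integrable.sqrt_mul_sqrt (hu : Integrable u μ) (hv : Integrable v μ)
    (hu0 : 0 ≤ᵐ[μ] u) (hv0 : 0 ≤ᵐ[μ] v) :
    Integrable (fun x => √(u x) * √(v x)) μ := by
  refine (hu.add hv).mono'
    (hu.1.aemeasurable.sqrt.mul hv.1.aemeasurable.sqrt).aestronglyMeasurable ?_
  filter_upwards [hu0, hv0] with x hux hvx
  rw [Real.norm_of_nonneg (by positivity), Pi.add_apply]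
  nlinarith [sq_nonneg (√(u x) - √(v x)), Real.sq_sqrt hux, Real.sq_sqrt hvx]

lemma integral_sqrt_mul_sqrt_le (hu : Integrable u μ) (hv : Integrable v μ)
    (hu0 : 0 ≤ᵐ[μ] u) (hv0 : 0 ≤ᵐ[μ] v) :
    ∫ x, √(u x) * √(v x) ∂μ ≤ √(∫ x, u x ∂μ) * √(∫ x, v x ∂μ) := by
  have hsq : ∀ {w : X → ℝ}, 0 ≤ᵐ[μ] w →
      ∫ x, √(w x) ^ (2 : ℝ) ∂μ = ∫ x, w x ∂μ :=
    fun hw0 => integral_congr_ae (hw0.mono fun x hx => by simp [Real.sq_sqrt hx])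
  have hL2 : ∀ {w : X → ℝ}, Integrable w μ → 0 ≤ᵐ[μ] w →
      MemLp (fun x => √(w x)) (ENNReal.ofReal 2) μ := fun hw hw0 => by
    rw [ENNReal.ofReal_ofNat,
      memLp_two_iff_integrable_sq hw.1.aemeasurable.sqrt.aestronglyMeasurable]
    exact hw.congr (hw0.mono fun x hx => (Real.sq_sqrt hx).symm)
  have := integral_mul_le_Lp_mul_Lq_of_nonneg Real.HolderConjugate.two_two
    (ae_of_all _ fun x => Real.sqrt_nonneg (u x)) (ae_of_all _ fun x => Real.sqrt_nonneg (v x))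
    (hL2 hu hu0) (hL2 hv hv0)
  rwa [hsq hu0, hsq hv0, ← Real.sqrt_eq_rpow, ← Real.sqrt_eq_rpow] at this

lemma sq_sqrt_add_sqrt_ae_eq (hu0 : 0 ≤ᵐ[μ] u) (hv0 : 0 ≤ᵐ[μ] v) :
    (fun x => (√(u x) + √(v x)) ^ 2)
      =ᵐ[μ] fun x => u x + v x + 2 * (√(u x) * √(v x)) := by
  filter_upwards [hu0, hv0] with x hux hvx
  rw [add_sq, Real.sq_sqrt hux, Real.sq_sqrt hvx]
  ring

lemma MeasureTheory.Integrable.sq_sqrt_add_sqrt (hu : Integrable u μ) (hv : Integrable v μ)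
    (hu0 : 0 ≤ᵐ[μ] u) (hv0 : 0 ≤ᵐ[μ] v) :
    Integrable (fun x => (√(u x) + √(v x)) ^ 2) μ :=
  ((hu.add hv).add ((hu.sqrt_mul_sqrt hv hu0 hv0).const_mul 2)).congr
    (sq_sqrt_add_sqrt_ae_eq hu0 hv0).symm

lemma integral_sq_sqrt_add_sqrt_le (hu : Integrable u μ) (hv : Integrable v μ)
    (hu0 : 0 ≤ᵐ[μ] u) (hv0 : 0 ≤ᵐ[μ] v) :
    ∫ x, (√(u x) + √(v x)) ^ 2 ∂μ
      ≤ (√(∫ x, u x ∂μ) + √(∫ x, v x ∂μ)) ^ 2 := by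
  have hCS := integral_sqrt_mul_sqrt_le hu hv hu0 hv0
  rw [integral_congr_ae (sq_sqrt_add_sqrt_ae_eq hu0 hv0),
    integral_add (f := fun x => u x + v x) (hu.add hv) ((hu.sqrt_mul_sqrt hv hu0 hv0).const_mul 2),
    integral_add hu hv, integral_const_mul, add_sq, Real.sq_sqrt (integral_nonneg_of_ae hu0),
    Real.sq_sqrt (integral_nonneg_of_ae hv0)]
  linarith

end

section

variable {X : Type*} [MeasurableSpace X]

lemma integrable_sqrt_toReal_rnDeriv (P Q : Measure X) [IsFiniteMeasure P] [IsFiniteMeasure Q] :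
    Integrable (fun x => √((P.rnDeriv Q x).toReal)) Q := by
  simpa using Measure.integrable_toReal_rnDeriv.sqrt_mul_sqrt (integrable_const 1)
    (ae_of_all _ fun _ => ENNReal.toReal_nonneg) (ae_of_all _ fun _ => zero_le_one)

lemma hellingerSq_eq_two_sub_integral_sqrt_toReal_rnDeriv (P Q : Measure X) [IsFiniteMeasure P]
    [IsProbabilityMeasure Q] :
    hellingerSq P Q = 2 - 2 * ∫ x, √((P.rnDeriv Q x).toReal) ∂Q := by
  rw [hellingerSq, fDiv, zero_mul, add_zero, EReal.toReal_coe,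
    integral_sub (integrable_const 1) (integrable_sqrt_toReal_rnDeriv P Q)]
  simp [mul_sub]

lemma integral_sqrt_toReal_rnDeriv_eq (P Q ν : Measure X) [SigmaFinite P] [SigmaFinite Q]
    [SigmaFinite ν] (hQν : Q ≪ ν) :
    ∫ x, √((P.rnDeriv Q x).toReal) ∂Q
      = ∫ x, √((P.rnDeriv ν x).toReal) * √((Q.rnDeriv ν x).toReal) ∂ν := by
  calc ∫ x, √((P.rnDeriv Q x).toReal) ∂Q
      = ∫ x, √((P.rnDeriv ν x).toReal / (Q.rnDeriv ν x).toReal) ∂Q := by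
        refine integral_congr_ae ?_
        filter_upwards [Measure.rnDeriv_mul_rnDeriv' (μ := P) hQν, Measure.rnDeriv_pos hQν,
          hQν.ae_le (Measure.rnDeriv_lt_top Q ν)] with x hmul hpos hfin
        rw [← hmul, Pi.mul_apply, ENNReal.toReal_mul,
          mul_div_cancel_right₀ _ (ENNReal.toReal_pos hpos.ne' hfin.ne).ne']
    _ = ∫ x, (Q.rnDeriv ν x).toReal
          * √((P.rnDeriv ν x).toReal / (Q.rnDeriv ν x).toReal) ∂ν :=
        (integral_toReal_rnDeriv_mul hQν).symm
    _ = ∫ x, √((P.rnDeriv ν x).toReal) * √((Q.rnDeriv ν x).toReal) ∂ν := by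
        congr 1 with x
        have hq : 0 ≤ (Q.rnDeriv ν x).toReal := ENNReal.toReal_nonneg
        generalize (Q.rnDeriv ν x).toReal = q at hq ⊢
        rcases hq.eq_or_lt with rfl | hq
        · simp
        · have := Real.sqrt_pos.2 hq
          rw [Real.sqrt_div' _ hq.le]
          field_simp
          rw [Real.sq_sqrt hq.le, mul_comm]

lemma hellingerSq_eq_two_sub_integral_sqrt_mul_sqrt (P Q ν : Measure X) [IsFiniteMeasure P]
    [IsProbabilityMeasure Q] [SigmaFinite ν] (hQν : Q ≪ ν) :
    hellingerSq P Q
      = 2 - 2 * ∫ x, √((P.rnDeriv ν x).toReal) * √((Q.rnDeriv ν x).toReal) ∂ν := by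
  rw [hellingerSq_eq_two_sub_integral_sqrt_toReal_rnDeriv,
    integral_sqrt_toReal_rnDeriv_eq P Q ν hQν]

lemma hellingerSq_nonneg (P Q : Measure X) [IsProbabilityMeasure P] [IsProbabilityMeasure Q] :
    0 ≤ hellingerSq P Q := by
  have hCS := integral_sqrt_mul_sqrt_le (Measure.integrable_toReal_rnDeriv (μ := P) (ν := Q))
    (integrable_const 1) (ae_of_all _ fun _ => ENNReal.toReal_nonneg)
    (ae_of_all _ fun _ => zero_le_one)
  have hmass : ∫ x, (P.rnDeriv Q x).toReal ∂Q ≤ 1 := by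
    simpa using Measure.setIntegral_toReal_rnDeriv_le (μ := P) (ν := Q) (s := univ)
      (measure_ne_top _ _)
  have : √(∫ x, (P.rnDeriv Q x).toReal ∂Q) ≤ 1 := Real.sqrt_le_one.mpr hmass
  simp only [Real.sqrt_one, mul_one, integral_const, probReal_univ, smul_eq_mul] at hCS
  rw [hellingerSq_eq_two_sub_integral_sqrt_toReal_rnDeriv]
  linarith

lemma sum_sum_one_sub_hellingerSq_div_two_eq_integral_sq {ι : Type*} [Fintype ι]
    (P : ι → Measure X) [∀ i, IsProbabilityMeasure (P i)] (ν : Measure X) [SigmaFinite ν]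
    (hPν : ∀ i, P i ≪ ν) :
    ∑ i, ∑ j, (1 - hellingerSq (P i) (P j) / 2)
      = ∫ x, (∑ i, √(((P i).rnDeriv ν x).toReal)) ^ 2 ∂ν := by
  have hint : ∀ i j, Integrable
      (fun x => √(((P i).rnDeriv ν x).toReal) * √(((P j).rnDeriv ν x).toReal)) ν :=
    fun i j => Measure.integrable_toReal_rnDeriv.sqrt_mul_sqrt Measure.integrable_toReal_rnDeriv
      (ae_of_all _ fun _ => ENNReal.toReal_nonneg) (ae_of_all _ fun _ => ENNReal.toReal_nonneg)
  simp_rw [sq, Finset.sum_mul_sum]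
  rw [integral_finsetSum _ fun i _ => integrable_finsetSum _ fun j _ => hint i j]
  refine Finset.sum_congr rfl fun i _ => ?_
  rw [integral_finsetSum _ fun j _ => hint i j]
  refine Finset.sum_congr rfl fun j _ => ?_
  rw [hellingerSq_eq_two_sub_integral_sqrt_mul_sqrt _ _ ν (hPν j)]
  ring

lemma sum_sum_one_sub_hellingerSq_div_two_le {ι : Type*} [Fintype ι] [MeasurableSpace ι]
    [MeasurableSingletonClass ι] (P : ι → Measure X) [∀ i, IsProbabilityMeasure (P i)]
    {d : X → ι} (hd : Measurable d) :
    ∑ i, ∑ j, (1 - hellingerSq (P i) (P j) / 2)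
      ≤ (√(Fintype.card ι - ∑ i, (P i {x | d x ≠ i}).toReal)
          + √((Fintype.card ι - 1) * ∑ i, (P i {x | d x ≠ i}).toReal)) ^ 2 := by
  classical
  set ν := ∑ i, P i
  have hPν : ∀ i, P i ≪ ν := fun i => Measure.absolutelyContinuous_of_le
    (Finset.single_le_sum (fun j _ => Measure.zero_le (P j)) (Finset.mem_univ i))
  set p : ι → X → ℝ := fun i x => ((P i).rnDeriv ν x).toReal
  have hp0 : ∀ i x, 0 ≤ p i x := fun i x => ENNReal.toReal_nonneg
  have hp : ∀ i, Integrable (p i) ν := fun i => Measure.integrable_toReal_rnDeriv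
  have hmeas : ∀ i, MeasurableSet {x | d x ≠ i} := fun i => hd (measurableSet_singleton i).compl
  set e : X → ℝ := fun x => ∑ i, {x | d x ≠ i}.indicator (p i) x
  have he : ∀ x, e x = ∑ i, p i x - p (d x) x := fun x => by
    simp [e, Set.indicator_apply, Finset.sum_ite, Finset.filter_ne, Finset.sum_erase_eq_sub]
  have he0 : ∀ x, 0 ≤ e x := fun x =>
    Finset.sum_nonneg fun i _ => Set.indicator_nonneg (fun x _ => hp0 i x) x
  have hei : Integrable e ν := integrable_finsetSum _ fun i _ => (hp i).indicator (hmeas i)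
  have hE : ∫ x, e x ∂ν = ∑ i, (P i {x | d x ≠ i}).toReal := by
    rw [integral_finsetSum _ fun i _ => (hp i).indicator (hmeas i)]
    exact Finset.sum_congr rfl fun i _ => by
      rw [integral_indicator (hmeas i), Measure.setIntegral_toReal_rnDeriv (hPν i)]; rfl
  have hpe : ∫ x, (∑ i, p i x - e x) ∂ν
      = Fintype.card ι - ∑ i, (P i {x | d x ≠ i}).toReal := by
    rw [integral_sub (integrable_finsetSum _ fun i _ => hp i) hei, hE,
      integral_finsetSum _ fun i _ => hp i]
    simp [p, Measure.integral_toReal_rnDeriv (hPν _)]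
  have hai : Integrable (fun x => ∑ i, p i x - e x) ν :=
    (integrable_finsetSum _ fun i _ => hp i).sub hei
  have ha0 : 0 ≤ᵐ[ν] fun x => ∑ i, p i x - e x := ae_of_all _ fun x => by simp [he, hp0]
  have hv0 : 0 ≤ᵐ[ν] fun x => (Fintype.card ι - 1) * e x := ae_of_all _ fun x =>
    mul_nonneg (sub_nonneg.2 (Nat.one_le_cast.2 (Fintype.card_pos_iff.2 ⟨d x⟩))) (he0 x)
  rw [sum_sum_one_sub_hellingerSq_div_two_eq_integral_sq P ν hPν]
  calc ∫ x, (∑ i, √(p i x)) ^ 2 ∂ν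
      ≤ ∫ x, (√(∑ i, p i x - e x) + √((Fintype.card ι - 1) * e x)) ^ 2 ∂ν := by
        refine integral_mono_of_nonneg (ae_of_all _ fun x => sq_nonneg _)
          (hai.sq_sqrt_add_sqrt (hei.const_mul _) ha0 hv0) (ae_of_all _ fun x => ?_)
        have := Real.sum_sqrt_le_sqrt_add_sqrt (hp0 · x) (d x)
        dsimp only
        rw [he, sub_sub_cancel]
        gcongr
    _ ≤ _ := integral_sq_sqrt_add_sqrt_le hai (hei.const_mul _) ha0 hv0
    _ = _ := by rw [hpe, integral_const_mul, hE]

end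

/-- With `(x, y) = √n (cos α, sin α)`, `(c, s) = (cos β, sin β)` and
`(1, f) = √n (cos γ, sin γ)`, the hypotheses say `|α - γ| ≤ β ≤ γ` and the conclusion
says `γ - β ≤ α`. -/
theorem le_add_mul_of_mul_le_add_mul {x y c s f n : ℝ} (hx : 0 ≤ x) (hy : 0 ≤ y)
    (hc : 0 ≤ c) (hs : 0 ≤ s) (hf : 0 ≤ f) (hxy : x ^ 2 + y ^ 2 = n) (hcs : c ^ 2 + s ^ 2 = 1)
    (hn : n = 1 + f ^ 2) (hsc : s ≤ f * c) (h : n * c ≤ x + f * y) : x ≤ c + f * s := by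
  have hn0 : 0 < n := by nlinarith
  have hfxy : f * x - y ≤ n * s := by
    have : (x + f * y) ^ 2 + (f * x - y) ^ 2 = (n * c) ^ 2 + (n * s) ^ 2 := by
      linear_combination -(x ^ 2 + y ^ 2) * hn + n * hxy - n ^ 2 * hcs
    exact (abs_le_of_sq_le_sq' (by nlinarith [mul_le_mul h h (by positivity) (by positivity)])
      (by positivity)).2
  have hfcs : f * c - s ≤ y := by
    refine le_of_mul_le_mul_left ?_ hn0
    nlinarith [mul_le_mul_of_nonneg_left h hf]
  refine abs_le_of_sq_le_sq' ?_ (by positivity) |>.2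
  nlinarith [mul_le_mul hfcs hfcs (by linarith) hy]

theorem risk_lower_bound_of_affinity_le {n E h : ℝ} (hn : 1 ≤ n) (hE0 : 0 ≤ E) (hEn : E ≤ n)
    (hh0 : 0 ≤ h) (hle : h ≤ 2 * (1 - 1 / n))
    (haff : n ^ 2 * (1 - h / 2) ≤ (√(n - E) + √((n - 1) * E)) ^ 2) :
    1 - 1 / n - (n - 2) / n * (h / 2) - √(n - 1) / n * √(h * (2 - h)) ≤ 1 / n * E := by
  have hn0 : 0 < n := by linarith
  have hnh : n * (h / 2) ≤ n - 1 :=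
    calc n * (h / 2) ≤ n * (1 - 1 / n) := by gcongr; linarith
      _ = n - 1 := by field_simp
  set c := √(1 - h / 2)
  set s := √(h / 2)
  set f := √(n - 1)
  have hc2 : c ^ 2 = 1 - h / 2 := Real.sq_sqrt (by nlinarith)
  have hs2 : s ^ 2 = h / 2 := Real.sq_sqrt (by linarith)
  have hf2 : f ^ 2 = n - 1 := Real.sq_sqrt (by linarith)
  have hsc : s ≤ f * c := by
    rw [← Real.sqrt_mul (by linarith)]
    exact Real.sqrt_le_sqrt (by linarith)
  have hmain : n * c ≤ √(n - E) + f * √E := by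
    rw [← Real.sqrt_mul (by linarith)]
    refine (abs_le_of_sq_le_sq' ?_ (by positivity)).2
    rwa [mul_pow, hc2]
  have key : √(n - E) ≤ c + f * s := le_add_mul_of_mul_le_add_mul (Real.sqrt_nonneg _)
    (Real.sqrt_nonneg _) (Real.sqrt_nonneg _) (Real.sqrt_nonneg _) (Real.sqrt_nonneg _)
    (by rw [Real.sq_sqrt (by linarith), Real.sq_sqrt hE0]; ring) (by rw [hc2, hs2]; ring)
    (by rw [hf2]; ring) hsc hmain
  have hroot : √(h * (2 - h)) = 2 * (s * c) := by
    rw [← Real.sqrt_mul (by linarith), ← Real.sqrt_sq zero_le_two,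
      ← Real.sqrt_mul (by positivity)]
    congr 1
    ring
  have hE : n - 1 - (n - 2) * (h / 2) - 2 * f * (s * c) ≤ E := by
    have := pow_le_pow_left₀ (Real.sqrt_nonneg _) key 2
    rw [Real.sq_sqrt (by linarith)] at this
    nlinarith
  rw [hroot]
  calc _ = (n - 1 - (n - 2) * (h / 2) - 2 * f * (s * c)) / n := by field_simp
    _ ≤ E / n := by gcongr
    _ = 1 / n * E := by ring

/-- Hellinger Bayes risk lower bound for `N` hypotheses under the uniform
prior and zero-one loss: if `h² = (1/N²) Σ_{i,j} H²(P_i‖P_j) ≤ 2(1 - 1/N)` then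
`R ≥ 1 - 1/N - ((N-2)/N)(h²/2) - (√(N-1)/N)√(h²(2-h²))`. -/
theorem hellinger_discrete_bayes_lower_bound {X : Type*} [MeasurableSpace X]
    (N : ℕ) (hN : 1 ≤ N)
    (P : Fin N → Measure X) (hP : ∀ i, IsProbabilityMeasure (P i))
    (h2 : ℝ)
    (hh2 : h2 = (1 / (N:ℝ)^2) * ∑ i, ∑ j, hellingerSq (P i) (P j))
    (hle : h2 ≤ 2 * (1 - 1/(N:ℝ))) :
    1 - 1/(N:ℝ) - ((N:ℝ) - 2)/(N:ℝ) * (h2/2)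
        - (Real.sqrt ((N:ℝ) - 1) / (N:ℝ)) * Real.sqrt (h2 * (2 - h2))
      ≤ ⨅ d : {d : X → Fin N // Measurable d},
          (1/(N:ℝ)) * ∑ i, ((P i) {x | d.1 x ≠ i}).toReal := by
  have : Nonempty {d : X → Fin N // Measurable d} :=
    ⟨⟨fun _ => ⟨0, hN⟩, measurable_const⟩⟩
  refine le_ciInf fun d => ?_
  have hN0 : (N : ℝ) ≠ 0 := by positivity
  have hsum : ∑ i, ∑ j, (1 - hellingerSq (P i) (P j) / 2) = (N : ℝ) ^ 2 * (1 - h2 / 2) := by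
    simp only [Finset.sum_sub_distrib, ← Finset.sum_div, Finset.sum_const, Finset.card_univ,
      Fintype.card_fin, nsmul_eq_mul, mul_one, hh2]
    field_simp
  have haff := sum_sum_one_sub_hellingerSq_div_two_le P d.2
  rw [hsum, Fintype.card_fin] at haff
  refine risk_lower_bound_of_affinity_le (by exact_mod_cast hN)
    (Finset.sum_nonneg fun i _ => ENNReal.toReal_nonneg) ?_ ?_ hle haff
  · exact (Finset.sum_le_sum fun i _ => measureReal_le_one).trans (by simp)
  · rw [hh2]
    exact mul_nonneg (by positivity) (Finset.sum_nonneg fun i _ =>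
      Finset.sum_nonneg fun j _ => hellingerSq_nonneg (P i) (P j))
end
end

section
/- The Hellinger informativity for a uniform prior on {θ_1,…,θ_N} admits the closed form I_{f_{1/2}}(w, P) = 1 - sqrt( 1 - (1/(2N²)) Σ_{i,j} H²(P_{θ_i}‖P_{θ_j}) ). More generally, for any prior w, inf_Q ∫ D_{f_{1/2}}(P_θ‖Q) w(dθ) = 1 - sqrt(∫_X u² dμ) where u(x) := ∫_Θ √(p_θ(x)) w(dθ). -/
/-!
Write `A(P, Q) = ∫ √(dP/dQ) dQ` for the Hellinger affinity, so that
`D_{f_{1/2}}(P‖Q) = 1 - A(P, Q)` for probability measures. If `P_θ = p_θ μ` and `Q` has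
`μ`-density `q` (its `μ`-singular part is invisible to the `P_θ`), then
`∫ A(P_θ, Q) w(dθ) = ∫ u √q dμ ≤ ‖u‖₂ ‖√q‖₂ ≤ ‖u‖₂` by Cauchy–Schwarz, with equality for
`q = u² / ∫ u²`. Hence the informativity is `1 - √(∫ u² dμ)`. For the uniform prior on `N`
points, taking `μ = ∑ P_i` gives `∫ u² dμ = N⁻² ∑_{i,j} A(P_i, P_j)`, and
`H²(P_i‖P_j) = 2 (1 - A(P_i, P_j))`.
-/

open MeasureTheory Filter Set
open scoped ENNReal NNReal

noncomputable section

namespace ENNReal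

lemma rpow_inv_two_sq (a : ℝ≥0∞) : (a ^ (2⁻¹ : ℝ)) ^ 2 = a := by
  rw [← ENNReal.rpow_natCast, ← ENNReal.rpow_mul]; norm_num

lemma sq_rpow_inv_two (a : ℝ≥0∞) : (a ^ 2) ^ (2⁻¹ : ℝ) = a := by
  rw [← ENNReal.rpow_natCast, ← ENNReal.rpow_mul]; norm_num

lemma mul_div_rpow_inv_two {a b : ℝ≥0∞} (hb : b ≠ ∞) :
    b * (a / b) ^ (2⁻¹ : ℝ) = (a * b) ^ (2⁻¹ : ℝ) := by
  rcases eq_or_ne b 0 with rfl | hb0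
  · simp
  have hs0 : b ^ (2⁻¹ : ℝ) ≠ 0 := by simp [hb0]
  have hst : b ^ (2⁻¹ : ℝ) ≠ ∞ := by simp [hb]
  rw [ENNReal.div_rpow_of_nonneg _ _ (by norm_num), ENNReal.mul_rpow_of_nonneg _ _ (by norm_num)]
  nth_rw 1 [← rpow_inv_two_sq b]
  rw [sq, mul_assoc, ENNReal.mul_div_cancel hs0 hst, mul_comm]

lemma ofReal_sqrt (a : ℝ) : ENNReal.ofReal (Real.sqrt a) = ENNReal.ofReal a ^ (2⁻¹ : ℝ) := by
  rcases le_total 0 a with ha | ha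
  · rw [Real.sqrt_eq_rpow, one_div, ENNReal.ofReal_rpow_of_nonneg ha (by norm_num)]
  · simp [Real.sqrt_eq_zero'.mpr ha, ENNReal.ofReal_eq_zero.mpr ha]

end ENNReal

section Lintegral
variable {X : Type*} [MeasurableSpace X] {μ : Measure X}

lemma lintegral_mul_le_sqrt_mul_sqrt {f g : X → ℝ≥0∞} (hf : AEMeasurable f μ)
    (hg : AEMeasurable g μ) :
    ∫⁻ x, f x * g x ∂μ ≤ (∫⁻ x, f x ^ 2 ∂μ) ^ (2⁻¹ : ℝ) * (∫⁻ x, g x ^ 2 ∂μ) ^ (2⁻¹ : ℝ) := by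
  simpa only [Pi.mul_apply, one_div, ENNReal.rpow_two] using
    ENNReal.lintegral_mul_le_Lp_mul_Lq μ Real.HolderConjugate.two_two hf hg

lemma lintegral_rpow_inv_two_le [IsProbabilityMeasure μ] {f : X → ℝ≥0∞}
    (hf : AEMeasurable f μ) :
    ∫⁻ x, f x ^ (2⁻¹ : ℝ) ∂μ ≤ (∫⁻ x, f x ∂μ) ^ (2⁻¹ : ℝ) := by
  simpa [ENNReal.rpow_inv_two_sq] using
    lintegral_mul_le_sqrt_mul_sqrt (hf.pow_const (2⁻¹ : ℝ)) (aemeasurable_const (b := (1 : ℝ≥0∞)))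

lemma lintegral_one_sub [IsProbabilityMeasure μ] {a : X → ℝ≥0∞} (ha : Measurable a)
    (ha_le : ∀ x, a x ≤ 1) :
    ∫⁻ x, (1 - a x) ∂μ = 1 - ∫⁻ x, a x ∂μ := by
  have h_le_one : ∫⁻ x, a x ∂μ ≤ 1 := (lintegral_mono ha_le).trans_eq (by simp)
  rw [lintegral_sub ha (h_le_one.trans_lt ENNReal.one_lt_top).ne (ae_of_all _ ha_le)]
  simp

lemma lintegral_sq_sum {ι : Type*} [Fintype ι] {f : ι → X → ℝ≥0∞} (hf : ∀ i, Measurable (f i)) :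
    ∫⁻ x, (∑ i, f i x) ^ 2 ∂μ = ∑ i, ∑ j, ∫⁻ x, f i x * f j x ∂μ := by
  simp_rw [sq, Finset.sum_mul_sum]
  rw [lintegral_finsetSum (f := fun i x => ∑ j, f i x * f j x) _ fun i _ => by fun_prop]
  exact Finset.sum_congr rfl fun i _ =>
    lintegral_finsetSum (f := fun j x => f i x * f j x) _ fun j _ => by fun_prop

lemma isProbabilityMeasure_withDensity_div_lintegral {f : X → ℝ≥0∞} (hf : Measurable f)
    (h_zero : ∫⁻ x, f x ∂μ ≠ 0) (h_top : ∫⁻ x, f x ∂μ ≠ ∞) :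
    IsProbabilityMeasure (μ.withDensity fun x => f x / ∫⁻ y, f y ∂μ) := by
  constructor
  rw [withDensity_apply _ .univ, setLIntegral_univ]
  simp_rw [div_eq_mul_inv]
  rw [lintegral_mul_const _ hf, ENNReal.mul_inv_cancel h_zero h_top]

lemma isProbabilityMeasure_withDensity_ofReal {p : X → ℝ} (hp : 0 ≤ p)
    (h_one : ∫ x, p x ∂μ = 1) :
    IsProbabilityMeasure (μ.withDensity fun x => ENNReal.ofReal (p x)) := by
  have h_int : Integrable p μ := Integrable.of_integral_ne_zero (by simp [h_one])
  constructor
  rw [withDensity_apply _ .univ, setLIntegral_univ,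
    ← ofReal_integral_eq_lintegral_ofReal h_int (ae_of_all _ hp), h_one, ENNReal.ofReal_one]

lemma MeasureTheory.Measure.absolutelyContinuous_finset_sum {ι : Type*} [Fintype ι]
    (P : ι → Measure X) (i : ι) : P i ≪ ∑ j, P j :=
  Measure.sum_fintype P ▸ Measure.absolutelyContinuous_sum_right i .rfl

end Lintegral

section HellingerAffinity
variable {X : Type*} [MeasurableSpace X]

def hellingerAffinity (P Q : Measure X) : ℝ≥0∞ := ∫⁻ x, P.rnDeriv Q x ^ (2⁻¹ : ℝ) ∂Q

lemma hellingerAffinity_le_one (P Q : Measure X) [IsProbabilityMeasure P]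
    [IsProbabilityMeasure Q] : hellingerAffinity P Q ≤ 1 :=
  calc hellingerAffinity P Q ≤ (∫⁻ x, P.rnDeriv Q x ∂Q) ^ (2⁻¹ : ℝ) :=
        lintegral_rpow_inv_two_le (Measure.measurable_rnDeriv P Q).aemeasurable
    _ ≤ 1 := ENNReal.rpow_le_one (Measure.lintegral_rnDeriv_le.trans_eq measure_univ) (by norm_num)

lemma hellingerAffinity_ne_top (P Q : Measure X) [IsProbabilityMeasure P]
    [IsProbabilityMeasure Q] : hellingerAffinity P Q ≠ ∞ :=
  ((hellingerAffinity_le_one P Q).trans_lt ENNReal.one_lt_top).ne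

lemma hellingerAffinity_eq_lintegral_of_absolutelyContinuous {ξ P Q : Measure X} [SigmaFinite ξ]
    [SigmaFinite P] [SigmaFinite Q] (hP : P ≪ ξ) (hQ : Q ≪ ξ) :
    hellingerAffinity P Q = ∫⁻ x, (P.rnDeriv ξ x * Q.rnDeriv ξ x) ^ (2⁻¹ : ℝ) ∂ξ :=
  calc hellingerAffinity P Q = ∫⁻ x, (P.rnDeriv ξ x / Q.rnDeriv ξ x) ^ (2⁻¹ : ℝ) ∂Q :=
        lintegral_congr_ae (by filter_upwards [Measure.rnDeriv_eq_div hP hQ] with x hx; rw [hx])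
    _ = ∫⁻ x, Q.rnDeriv ξ x * (P.rnDeriv ξ x / Q.rnDeriv ξ x) ^ (2⁻¹ : ℝ) ∂ξ :=
        (lintegral_rnDeriv_mul hQ (by fun_prop)).symm
    _ = _ := lintegral_congr_ae ((Q.rnDeriv_lt_top ξ).mono fun x hx =>
        ENNReal.mul_div_rpow_inv_two hx.ne)

lemma hellingerAffinity_eq_lintegral {μ P Q : Measure X} [SigmaFinite μ] [SigmaFinite P]
    [SigmaFinite Q] (hP : P ≪ μ) :
    hellingerAffinity P Q = ∫⁻ x, (P.rnDeriv μ x * Q.rnDeriv μ x) ^ (2⁻¹ : ℝ) ∂μ := by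
  set Qs := Q.singularPart μ
  set Qa := μ.withDensity (Q.rnDeriv μ)
  have hQ : Q = Qa + Qs := (Q.haveLebesgueDecomposition_add μ).trans (add_comm _ _)
  have hμQs : μ ⟂ₘ Qs := (Q.mutuallySingular_singularPart μ).symm
  have hQa : Qa ≪ μ := withDensity_absolutelyContinuous _ _
  have h_sing : P.rnDeriv Q =ᵐ[Qs] 0 :=
    Measure.rnDeriv_eq_zero_of_mutuallySingular (hμQs.mono_ac hP .rfl)
      (Q.singularPart_le μ).absolutelyContinuous
  have h_ac : P.rnDeriv Q =ᵐ[Qa] P.rnDeriv Qa := by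
    rw [hQ]; exact Measure.rnDeriv_add_right_of_mutuallySingular (hμQs.mono_ac hQa .rfl)
  have h_dens : Qa.rnDeriv μ =ᵐ[μ] Q.rnDeriv μ :=
    Measure.rnDeriv_withDensity μ (Measure.measurable_rnDeriv Q μ)
  have h_zero : ∫⁻ x, P.rnDeriv Q x ^ (2⁻¹ : ℝ) ∂Qs = 0 :=
    lintegral_eq_zero_of_ae_eq_zero (by filter_upwards [h_sing] with x hx; simp [hx])
  calc hellingerAffinity P Q
      = ∫⁻ x, P.rnDeriv Q x ^ (2⁻¹ : ℝ) ∂Qa + ∫⁻ x, P.rnDeriv Q x ^ (2⁻¹ : ℝ) ∂Qs := by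
        rw [hellingerAffinity, ← lintegral_add_measure, ← hQ]
    _ = hellingerAffinity P Qa := by
        rw [h_zero, add_zero, hellingerAffinity]
        exact lintegral_congr_ae (by filter_upwards [h_ac] with x hx; rw [hx])
    _ = ∫⁻ x, (P.rnDeriv μ x * Qa.rnDeriv μ x) ^ (2⁻¹ : ℝ) ∂μ :=
        hellingerAffinity_eq_lintegral_of_absolutelyContinuous hP hQa
    _ = _ := lintegral_congr_ae (by filter_upwards [h_dens] with x hx; rw [hx])

lemma hellingerAffinity_withDensity_left {μ P : Measure X} [SigmaFinite μ] [SigmaFinite P]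
    {pd : X → ℝ≥0∞} (hpd : Measurable pd) (hP : P = μ.withDensity pd) (Q : Measure X)
    [SigmaFinite Q] :
    hellingerAffinity P Q = ∫⁻ x, pd x ^ (2⁻¹ : ℝ) * Q.rnDeriv μ x ^ (2⁻¹ : ℝ) ∂μ := by
  have h_dens : P.rnDeriv μ =ᵐ[μ] pd := hP ▸ Measure.rnDeriv_withDensity μ hpd
  rw [hellingerAffinity_eq_lintegral (hP ▸ withDensity_absolutelyContinuous μ pd)]
  refine lintegral_congr_ae ?_
  filter_upwards [h_dens] with x hx
  rw [hx, ENNReal.mul_rpow_of_nonneg _ _ (by norm_num)]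

lemma fDiv_one_sub_sqrt (P Q : Measure X) [IsProbabilityMeasure P] [IsProbabilityMeasure Q] :
    fDiv (fun x => 1 - Real.sqrt x) 0 P Q = ((1 - (hellingerAffinity P Q).toReal : ℝ) : EReal) := by
  have h_meas : AEMeasurable (fun x => P.rnDeriv Q x ^ (2⁻¹ : ℝ)) Q := by fun_prop
  have h_sqrt : ∀ x, Real.sqrt (P.rnDeriv Q x).toReal = (P.rnDeriv Q x ^ (2⁻¹ : ℝ)).toReal :=
    fun x => by rw [Real.sqrt_eq_rpow, ENNReal.toReal_rpow, one_div]
  have h_integral : ∫ x, Real.sqrt (P.rnDeriv Q x).toReal ∂Q = (hellingerAffinity P Q).toReal := by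
    simp_rw [h_sqrt]
    refine integral_toReal h_meas ?_
    filter_upwards [P.rnDeriv_lt_top Q] with x hx
    exact ENNReal.rpow_lt_top_of_nonneg (by norm_num) hx.ne
  have h_integrable : Integrable (fun x => Real.sqrt (P.rnDeriv Q x).toReal) Q := by
    simp_rw [h_sqrt]
    exact integrable_toReal_of_lintegral_ne_top h_meas (hellingerAffinity_ne_top P Q)
  rw [fDiv, zero_mul, add_zero, integral_sub (integrable_const 1) h_integrable, h_integral]
  simp

lemma erealToENNReal_fDiv_one_sub_sqrt (P Q : Measure X) [IsProbabilityMeasure P]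
    [IsProbabilityMeasure Q] :
    erealToENNReal (fDiv (fun x => 1 - Real.sqrt x) 0 P Q) = 1 - hellingerAffinity P Q := by
  rw [fDiv_one_sub_sqrt, erealToENNReal, if_neg (EReal.coe_ne_top _), EReal.toReal_coe,
    ENNReal.ofReal_sub _ ENNReal.toReal_nonneg, ENNReal.ofReal_one,
    ENNReal.ofReal_toReal (hellingerAffinity_ne_top P Q)]

lemma hellingerSq_eq_hellingerAffinity (P Q : Measure X) [IsProbabilityMeasure P]
    [IsProbabilityMeasure Q] : hellingerSq P Q = 2 * (1 - (hellingerAffinity P Q).toReal) := by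
  rw [hellingerSq, fDiv_one_sub_sqrt, EReal.toReal_coe]

end HellingerAffinity

section Informativity
variable {Θ X : Type*} [MeasurableSpace Θ] [MeasurableSpace X]

/-- The function `u` of the closed form. -/
def sqrtDensityMean (w : Measure Θ) (pd : Θ → X → ℝ≥0∞) (x : X) : ℝ≥0∞ :=
  ∫⁻ θ, pd θ x ^ (2⁻¹ : ℝ) ∂w

variable {w : Measure Θ} {pd : Θ → X → ℝ≥0∞}

lemma measurable_sqrtDensityMean [SFinite w] (hpd : Measurable (Function.uncurry pd)) :
    Measurable (sqrtDensityMean w pd) :=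
  (hpd.pow_const _).lintegral_prod_left'

lemma integral_sq_integral_sqrt {μ : Measure X} {p : Θ → X → ℝ} [SFinite w]
    (hp : Measurable (Function.uncurry p))
    (h_top : ∫⁻ x, sqrtDensityMean w (fun θ x => ENNReal.ofReal (p θ x)) x ^ 2 ∂μ ≠ ∞) :
    ∫ x, (∫ θ, Real.sqrt (p θ x) ∂w) ^ 2 ∂μ
      = (∫⁻ x, sqrtDensityMean w (fun θ x => ENNReal.ofReal (p θ x)) x ^ 2 ∂μ).toReal := by
  have hU := measurable_sqrtDensityMean (w := w) (pd := fun θ x => ENNReal.ofReal (p θ x))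
    (ENNReal.measurable_ofReal.comp hp)
  have h_inner : ∀ x, ∫ θ, Real.sqrt (p θ x) ∂w
      = (sqrtDensityMean w (fun θ x => ENNReal.ofReal (p θ x)) x).toReal := fun x => by
    rw [integral_eq_lintegral_of_nonneg_ae (ae_of_all _ fun θ => Real.sqrt_nonneg _)
      (by fun_prop)]
    simp_rw [ENNReal.ofReal_sqrt, sqrtDensityMean]
  simp_rw [h_inner, ← ENNReal.toReal_pow]
  exact integral_toReal (by fun_prop) (ae_lt_top (by fun_prop) h_top)

variable {μ : Measure X} [SigmaFinite μ] {P : Θ → Measure X}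

lemma measurable_hellingerAffinity (hpd : Measurable (Function.uncurry pd))
    (hP : ∀ θ, P θ = μ.withDensity (pd θ)) [∀ θ, SigmaFinite (P θ)]
    (Q : Measure X) [SigmaFinite Q] :
    Measurable fun θ => hellingerAffinity (P θ) Q := by
  simp_rw [hellingerAffinity_withDensity_left (hpd.comp measurable_prodMk_left) (hP _) Q]
  exact Measurable.lintegral_prod_right'
    (f := fun q : Θ × X => pd q.1 q.2 ^ (2⁻¹ : ℝ) * Q.rnDeriv μ q.2 ^ (2⁻¹ : ℝ)) (by fun_prop)

lemma lintegral_hellingerAffinity [SFinite w] (hpd : Measurable (Function.uncurry pd))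
    (hP : ∀ θ, P θ = μ.withDensity (pd θ)) [∀ θ, SigmaFinite (P θ)]
    (Q : Measure X) [SigmaFinite Q] :
    ∫⁻ θ, hellingerAffinity (P θ) Q ∂w
      = ∫⁻ x, sqrtDensityMean w pd x * Q.rnDeriv μ x ^ (2⁻¹ : ℝ) ∂μ := by
  simp_rw [hellingerAffinity_withDensity_left (hpd.comp measurable_prodMk_left) (hP _) Q]
  rw [lintegral_lintegral_swap (by fun_prop)]
  exact lintegral_congr fun x =>
    lintegral_mul_const _ ((hpd.comp measurable_prodMk_right).pow_const _)

lemma lintegral_sq_sqrtDensityMean_le_one [IsProbabilityMeasure w]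
    (hpd : Measurable (Function.uncurry pd)) (hP : ∀ θ, P θ = μ.withDensity (pd θ))
    [∀ θ, IsProbabilityMeasure (P θ)] :
    ∫⁻ x, sqrtDensityMean w pd x ^ 2 ∂μ ≤ 1 := by
  have h_mass : ∀ θ, ∫⁻ x, pd θ x ∂μ = 1 := fun θ => by
    rw [← setLIntegral_univ, ← withDensity_apply _ .univ, ← hP θ, measure_univ]
  have h_jensen : ∀ x, sqrtDensityMean w pd x ^ 2 ≤ ∫⁻ θ, pd θ x ∂w := fun x =>
    calc sqrtDensityMean w pd x ^ 2 ≤ ((∫⁻ θ, pd θ x ∂w) ^ (2⁻¹ : ℝ)) ^ 2 :=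
          pow_le_pow_left' (lintegral_rpow_inv_two_le (by fun_prop)) 2
      _ = ∫⁻ θ, pd θ x ∂w := ENNReal.rpow_inv_two_sq _
  calc ∫⁻ x, sqrtDensityMean w pd x ^ 2 ∂μ ≤ ∫⁻ x, ∫⁻ θ, pd θ x ∂w ∂μ := lintegral_mono h_jensen
    _ = ∫⁻ θ, ∫⁻ x, pd θ x ∂μ ∂w := lintegral_lintegral_swap (by fun_prop)
    _ = 1 := by simp [h_mass]

lemma lintegral_hellingerAffinity_le [SFinite w] (hpd : Measurable (Function.uncurry pd))
    (hP : ∀ θ, P θ = μ.withDensity (pd θ)) [∀ θ, SigmaFinite (P θ)]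
    (Q : Measure X) [IsProbabilityMeasure Q] :
    ∫⁻ θ, hellingerAffinity (P θ) Q ∂w ≤ (∫⁻ x, sqrtDensityMean w pd x ^ 2 ∂μ) ^ (2⁻¹ : ℝ) := by
  have h_mass : (∫⁻ x, (Q.rnDeriv μ x ^ (2⁻¹ : ℝ)) ^ 2 ∂μ) ^ (2⁻¹ : ℝ) ≤ 1 := by
    simp_rw [ENNReal.rpow_inv_two_sq]
    exact ENNReal.rpow_le_one (Measure.lintegral_rnDeriv_le.trans_eq measure_univ) (by norm_num)
  calc ∫⁻ θ, hellingerAffinity (P θ) Q ∂w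
      = ∫⁻ x, sqrtDensityMean w pd x * Q.rnDeriv μ x ^ (2⁻¹ : ℝ) ∂μ :=
        lintegral_hellingerAffinity hpd hP Q
    _ ≤ (∫⁻ x, sqrtDensityMean w pd x ^ 2 ∂μ) ^ (2⁻¹ : ℝ)
          * (∫⁻ x, (Q.rnDeriv μ x ^ (2⁻¹ : ℝ)) ^ 2 ∂μ) ^ (2⁻¹ : ℝ) :=
        lintegral_mul_le_sqrt_mul_sqrt (measurable_sqrtDensityMean hpd).aemeasurable (by fun_prop)
    _ ≤ (∫⁻ x, sqrtDensityMean w pd x ^ 2 ∂μ) ^ (2⁻¹ : ℝ) := mul_le_of_le_one_right' h_mass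

lemma lintegral_hellingerAffinity_withDensity_sq_div [SFinite w]
    (hpd : Measurable (Function.uncurry pd)) (hP : ∀ θ, P θ = μ.withDensity (pd θ))
    [∀ θ, SigmaFinite (P θ)] (h_zero : ∫⁻ x, sqrtDensityMean w pd x ^ 2 ∂μ ≠ 0)
    (h_top : ∫⁻ x, sqrtDensityMean w pd x ^ 2 ∂μ ≠ ∞) :
    ∫⁻ θ, hellingerAffinity (P θ) (μ.withDensity fun x =>
        sqrtDensityMean w pd x ^ 2 / ∫⁻ y, sqrtDensityMean w pd y ^ 2 ∂μ) ∂w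
      = (∫⁻ x, sqrtDensityMean w pd x ^ 2 ∂μ) ^ (2⁻¹ : ℝ) := by
  set U := sqrtDensityMean w pd
  set c := ∫⁻ x, U x ^ 2 ∂μ
  have hU : Measurable U := measurable_sqrtDensityMean hpd
  have := isProbabilityMeasure_withDensity_div_lintegral (hU.pow_const 2) h_zero h_top
  have h_dens : (μ.withDensity fun x => U x ^ 2 / c).rnDeriv μ =ᵐ[μ] fun x => U x ^ 2 / c :=
    Measure.rnDeriv_withDensity μ (by fun_prop)
  have hs0 : c ^ (2⁻¹ : ℝ) ≠ 0 := by simp [h_zero]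
  have hst : c ^ (2⁻¹ : ℝ) ≠ ∞ := by simp [h_top]
  calc ∫⁻ θ, hellingerAffinity (P θ) (μ.withDensity fun x => U x ^ 2 / c) ∂w
      = ∫⁻ x, U x ^ 2 * (c ^ (2⁻¹ : ℝ))⁻¹ ∂μ := by
        rw [lintegral_hellingerAffinity hpd hP]
        refine lintegral_congr_ae ?_
        filter_upwards [h_dens] with x hx
        rw [hx, ENNReal.div_rpow_of_nonneg _ _ (by norm_num), ENNReal.sq_rpow_inv_two,
          ← mul_div_assoc, ← sq, div_eq_mul_inv]
    _ = c * (c ^ (2⁻¹ : ℝ))⁻¹ := lintegral_mul_const _ (hU.pow_const 2)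
    _ = c ^ (2⁻¹ : ℝ) := by
        nth_rw 1 [← ENNReal.rpow_inv_two_sq c]
        rw [sq, mul_assoc, ENNReal.mul_inv_cancel hs0 hst, mul_one]

lemma exists_le_lintegral_hellingerAffinity [IsProbabilityMeasure w]
    (hpd : Measurable (Function.uncurry pd)) (hP : ∀ θ, P θ = μ.withDensity (pd θ))
    [∀ θ, IsProbabilityMeasure (P θ)] :
    ∃ Q : Measure X, IsProbabilityMeasure Q ∧
      (∫⁻ x, sqrtDensityMean w pd x ^ 2 ∂μ) ^ (2⁻¹ : ℝ) ≤ ∫⁻ θ, hellingerAffinity (P θ) Q ∂w := by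
  rcases eq_or_ne (∫⁻ x, sqrtDensityMean w pd x ^ 2 ∂μ) 0 with h_zero | h_zero
  · obtain ⟨θ₀⟩ := nonempty_of_isProbabilityMeasure w
    exact ⟨P θ₀, inferInstance, by simp [h_zero]⟩
  · have h_top :=
      ((lintegral_sq_sqrtDensityMean_le_one (w := w) hpd hP).trans_lt ENNReal.one_lt_top).ne
    exact ⟨_, isProbabilityMeasure_withDensity_div_lintegral
      ((measurable_sqrtDensityMean hpd).pow_const 2) h_zero h_top,
      (lintegral_hellingerAffinity_withDensity_sq_div hpd hP h_zero h_top).ge⟩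

theorem fInformativity_one_sub_sqrt [IsProbabilityMeasure w]
    (hpd : Measurable (Function.uncurry pd)) (hP : ∀ θ, P θ = μ.withDensity (pd θ))
    [∀ θ, IsProbabilityMeasure (P θ)] :
    fInformativity (fun x => 1 - Real.sqrt x) 0 P w
      = ((1 - Real.sqrt (∫⁻ x, sqrtDensityMean w pd x ^ 2 ∂μ).toReal : ℝ) : EReal) := by
  set c := ∫⁻ x, sqrtDensityMean w pd x ^ 2 ∂μ
  have h_value : ((1 - Real.sqrt c.toReal : ℝ) : EReal)
      = ((1 - c ^ (2⁻¹ : ℝ) : ℝ≥0∞) : EReal) := by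
    have hs : c ^ (2⁻¹ : ℝ) ≤ 1 :=
      ENNReal.rpow_le_one (lintegral_sq_sqrtDensityMean_le_one hpd hP) (by norm_num)
    rw [Real.sqrt_eq_rpow, one_div, ENNReal.toReal_rpow, ← ENNReal.toReal_one,
      ← ENNReal.toReal_sub_of_le hs ENNReal.one_ne_top, EReal.coe_ennreal_toReal (by simp)]
  have h_objective : ∀ (Q : Measure X) [IsProbabilityMeasure Q],
      ∫⁻ θ, erealToENNReal (fDiv (fun x => 1 - Real.sqrt x) 0 (P θ) Q) ∂w
        = 1 - ∫⁻ θ, hellingerAffinity (P θ) Q ∂w := fun Q _ => by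
    simp_rw [erealToENNReal_fDiv_one_sub_sqrt]
    exact lintegral_one_sub (measurable_hellingerAffinity hpd hP Q)
      fun θ => hellingerAffinity_le_one _ _
  obtain ⟨Q₀, hQ₀, h_opt⟩ := exists_le_lintegral_hellingerAffinity (w := w) hpd hP
  rw [h_value, fInformativity]
  refine le_antisymm (iInf₂_le_of_le Q₀ hQ₀ ?_) (le_iInf₂ fun Q hQ => ?_)
  · rw [h_objective Q₀]
    exact EReal.coe_ennreal_le_coe_ennreal_iff.mpr (tsub_le_tsub_left h_opt 1)
  · rw [h_objective Q]
    exact EReal.coe_ennreal_le_coe_ennreal_iff.mpr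
      (tsub_le_tsub_left (lintegral_hellingerAffinity_le hpd hP Q) 1)

end Informativity

section UniformPrior
variable {X : Type*} [MeasurableSpace X]

lemma isProbabilityMeasure_uniform_fin {N : ℕ} (hN : N ≠ 0) :
    IsProbabilityMeasure ((N : ℝ≥0∞)⁻¹ • Measure.count : Measure (Fin N)) :=
  ⟨by simp [ENNReal.inv_mul_cancel (Nat.cast_ne_zero.mpr hN) (ENNReal.natCast_ne_top N)]⟩

lemma lintegral_sq_sqrtDensityMean_uniform {N : ℕ} (P : Fin N → Measure X)
    [∀ i, IsFiniteMeasure (P i)] :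
    ∫⁻ x, sqrtDensityMean ((N : ℝ≥0∞)⁻¹ • Measure.count) (fun i => (P i).rnDeriv (∑ j, P j)) x ^ 2
        ∂(∑ j, P j)
      = (N : ℝ≥0∞)⁻¹ ^ 2 * ∑ i, ∑ j, hellingerAffinity (P i) (P j) := by
  set μ := ∑ j, P j
  have h_mean : ∀ x, sqrtDensityMean ((N : ℝ≥0∞)⁻¹ • Measure.count) (fun i => (P i).rnDeriv μ) x
      = (N : ℝ≥0∞)⁻¹ * ∑ i, (P i).rnDeriv μ x ^ (2⁻¹ : ℝ) := fun x => by
    simp [sqrtDensityMean, lintegral_fintype, Finset.mul_sum, mul_comm]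
  simp_rw [h_mean, mul_pow]
  rw [lintegral_const_mul _ (by fun_prop), lintegral_sq_sum (fun i => by fun_prop)]
  congr 1
  refine Finset.sum_congr rfl fun i _ => Finset.sum_congr rfl fun j _ => ?_
  rw [hellingerAffinity_eq_lintegral_of_absolutelyContinuous
    (Measure.absolutelyContinuous_finset_sum P i) (Measure.absolutelyContinuous_finset_sum P j)]
  simp_rw [ENNReal.mul_rpow_of_nonneg _ _ (by norm_num : (0 : ℝ) ≤ 2⁻¹)]
  rfl

lemma one_sub_sum_hellingerSq {N : ℕ} (hN : N ≠ 0) (P : Fin N → Measure X)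
    [∀ i, IsProbabilityMeasure (P i)] :
    1 - 1 / (2 * (N : ℝ) ^ 2) * ∑ i, ∑ j, hellingerSq (P i) (P j)
      = ((N : ℝ≥0∞)⁻¹ ^ 2 * ∑ i, ∑ j, hellingerAffinity (P i) (P j)).toReal := by
  have h_ne_top : ∀ i j, hellingerAffinity (P i) (P j) ≠ ∞ :=
    fun i j => hellingerAffinity_ne_top _ _
  simp_rw [hellingerSq_eq_hellingerAffinity]
  rw [ENNReal.toReal_mul, ENNReal.toReal_pow, ENNReal.toReal_inv, ENNReal.toReal_natCast,
    ENNReal.toReal_sum fun i _ => ENNReal.sum_ne_top.mpr fun j _ => h_ne_top i j]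
  simp_rw [ENNReal.toReal_sum fun j _ => h_ne_top _ j]
  simp only [← Finset.mul_sum, Finset.sum_sub_distrib, Finset.sum_const, Finset.card_univ,
    Fintype.card_fin, nsmul_eq_mul]
  field_simp
  ring

end UniformPrior

/-- Closed form for the Hellinger informativity (for `f_{1/2}(x) = 1 - √x`,
with `f'(∞) = 0`): for the uniform prior on `N` points it equals
`1 - √(1 - (1/(2N²)) Σ_{i,j} H²(P_i‖P_j))`; more generally, for any prior `w` and
densities `p_θ` with respect to `μ`, it equals `1 - √(∫ u² dμ)` with
`u(x) = ∫ √(p_θ(x)) w(dθ)`. -/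
theorem hellinger_informativity_closed_form :
    (∀ (X : Type) [MeasurableSpace X] (N : ℕ), 1 ≤ N →
      ∀ (P : Fin N → Measure X), (∀ i, IsProbabilityMeasure (P i)) →
      fInformativity (fun x => 1 - Real.sqrt x) 0 P (((N : ℝ≥0∞))⁻¹ • Measure.count)
        = ((1 - Real.sqrt (1 - (1 / (2 * (N:ℝ)^2))
              * ∑ i, ∑ j, hellingerSq (P i) (P j)) : ℝ) : EReal))
    ∧
    (∀ (Θ X : Type) [MeasurableSpace Θ] [MeasurableSpace X] (μ : Measure X),
      SigmaFinite μ →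
      ∀ (w : Measure Θ), IsProbabilityMeasure w →
      ∀ (p : Θ → X → ℝ), (∀ θ x, 0 ≤ p θ x) →
      Measurable (Function.uncurry p) →
      (∀ θ, ∫ x, p θ x ∂μ = 1) →
      ∀ (P : Θ → Measure X),
      (∀ θ, P θ = μ.withDensity (fun x => ENNReal.ofReal (p θ x))) →
      fInformativity (fun x => 1 - Real.sqrt x) 0 P w
        = ((1 - Real.sqrt (∫ x, (∫ θ, Real.sqrt (p θ x) ∂w) ^ 2 ∂μ) : ℝ) : EReal)) := by
  refine ⟨fun X _ N hN P _ => ?_, fun Θ X _ _ μ _ w _ p hp_nonneg hp h_one P hP => ?_⟩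
  · have := isProbabilityMeasure_uniform_fin (by omega : N ≠ 0)
    have hpd : Measurable (Function.uncurry fun i => (P i).rnDeriv (∑ j, P j)) :=
      measurable_from_prod_countable_right fun i => Measure.measurable_rnDeriv (P i) _
    have hP i : P i = (∑ j, P j).withDensity ((P i).rnDeriv (∑ j, P j)) :=
      (Measure.withDensity_rnDeriv_eq _ _ (Measure.absolutelyContinuous_finset_sum P i)).symm
    rw [fInformativity_one_sub_sqrt hpd hP, lintegral_sq_sqrtDensityMean_uniform,
      one_sub_sum_hellingerSq (by omega)]
  · have _ : ∀ θ, IsProbabilityMeasure (P θ) := fun θ =>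
      hP θ ▸ isProbabilityMeasure_withDensity_ofReal (hp_nonneg θ) (h_one θ)
    have hpd : Measurable (Function.uncurry fun θ x => ENNReal.ofReal (p θ x)) :=
      ENNReal.measurable_ofReal.comp hp
    rw [fInformativity_one_sub_sqrt hpd hP, integral_sq_integral_sqrt hp
      ((lintegral_sq_sqrtDensityMean_le_one hpd hP).trans_lt ENNReal.one_lt_top).ne]
end
end
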